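/- Let D be a division ring with center F, K a maximal subfield of D that is algebraic over F with K = F(S) for a subset S ⊆ K, and let a ∈ D \ K be such that S_a := {x ∈ S : a*x ≠ x*a} is finite. Then the division subring K(a) generated by K and a is finite-dimensional over its center, and a is not in the center of K(a). -/

import Mathlib

/-!
Maximality of `K` says that the centralizer of `K` in `D` is `K`; hence the same holds in
`E = K(a)`, and `a` is not central in `E`. The field `C = C_D(K ∪ {a})` lies in `K` and in the
center of `E`, and `K` is generated over `C` by the finitely many elements of `S` that do not
commute with `a`, which are algebraic; so `K` is finite over `Z(E)`.

It remains to see (Lam 15.8) that a division ring `E` with a subfield `k` such that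
`C_E(k) ⊆ k` and `k` is spanned over `Z(E)` by `b₁, …, bₙ` is finite over `Z(E)`. Let `R` be
the ring of additive endomorphisms of `E` generated by the maps `t ↦ d * t * c` with `c ∈ k`.
Then `E` is a simple `R`-module whose `R`-endomorphisms are the right multiplications by
elements of `C_E(k) = k`. If `x₁, …, x_m` are linearly independent over `End_R E`, the
Jacobson density theorem makes the left `E`-linear map `Eⁿ → Eᵐ`, `w ↦ (∑ᵢ wᵢ xⱼ bᵢ)ⱼ`
surjective, so `m ≤ n`. Thus `E` is finite over `End_R E`, and therefore over `Z(E)`.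
-/

theorem LinearIndependent.exists_linearMap_apply_eq {K V W ι : Type*} [DivisionRing K]
    [AddCommGroup V] [Module K V] [AddCommGroup W] [Module K W] {x : ι → V}
    (hx : LinearIndependent K x) (y : ι → W) : ∃ f : V →ₗ[K] W, ∀ i, f (x i) = y i := by
  obtain ⟨f, hf⟩ := LinearMap.exists_extend ((Module.Basis.span hx).constr ℕ y)
  refine ⟨f, fun i => ?_⟩
  have := congr($hf (Module.Basis.span hx i))
  rwa [LinearMap.comp_apply, Module.Basis.constr_basis, Submodule.subtype_apply,
    Module.Basis.span_apply] at this

namespace DivisionRing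

variable {E : Type*} [DivisionRing E] (k : Subfield E)

def sandwichMonoid : Submonoid (Module.End ℤ E) where
  carrier := {f | ∃ d, ∃ c ∈ k, ∀ t, f t = d * t * c}
  one_mem' := ⟨1, 1, k.one_mem, fun t => by simp⟩
  mul_mem' := by
    rintro f g ⟨d, c, hc, hf⟩ ⟨d', c', hc', hg⟩
    exact ⟨d * d', c' * c, k.mul_mem hc' hc, fun t => by simp [hf, hg, mul_assoc]⟩

def sandwichRing : Subring (Module.End ℤ E) :=
  Subring.closure (sandwichMonoid k)

variable {k}

theorem mulLeft_mem_sandwichRing (d : E) : LinearMap.mulLeft ℤ d ∈ sandwichRing k :=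
  Subring.subset_closure ⟨d, 1, k.one_mem, fun t => by simp⟩

theorem mulRight_mem_sandwichRing {c : E} (hc : c ∈ k) :
    LinearMap.mulRight ℤ c ∈ sandwichRing k :=
  Subring.subset_closure ⟨1, c, hc, fun t => by simp⟩

theorem sandwichRing_smul (r : sandwichRing k) (t : E) : r • t = (r : Module.End ℤ E) t :=
  rfl

instance : IsSimpleModule (sandwichRing k) E := by
  refine isSimpleModule_iff_toSpanSingleton_surjective.mpr ⟨inferInstance, fun x hx y => ?_⟩
  refine ⟨⟨LinearMap.mulLeft ℤ (y * x⁻¹), mulLeft_mem_sandwichRing _⟩, ?_⟩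
  simp [sandwichRing_smul, hx]

theorem sandwichRing_end_apply (φ : Module.End (sandwichRing k) E) (t : E) :
    φ t = t * φ 1 := by
  simpa [sandwichRing_smul] using φ.map_smul ⟨_, mulLeft_mem_sandwichRing t⟩ 1

theorem sandwichRing_end_apply_one_mem (hk : Set.centralizer (k : Set E) ⊆ k)
    (φ : Module.End (sandwichRing k) E) : φ 1 ∈ k := by
  refine hk fun c hc => ?_
  have := φ.map_smul ⟨_, mulRight_mem_sandwichRing hc⟩ 1
  simp only [sandwichRing_smul, LinearMap.mulRight_apply, one_mul] at this
  exact (sandwichRing_end_apply φ c).symm.trans this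

variable {ι : Type*} [Fintype ι] {b : ι → E}

theorem exists_sum_of_mem_sandwichRing
    (hb : (k : Set E) ⊆ Submodule.span (Subring.center E) (Set.range b))
    {r : Module.End ℤ E} (hr : r ∈ sandwichRing k) :
    ∃ w : ι → E, ∀ t, r t = ∑ i, w i * t * b i := by
  rw [sandwichRing, Subring.mem_closure_iff, Submonoid.closure_eq] at hr
  induction hr using AddSubgroup.closure_induction with
  | mem f hf =>
    obtain ⟨d, c, hc, hf⟩ := hf
    obtain ⟨z, rfl⟩ := (Submodule.mem_span_range_iff_exists_fun _).mp (hb hc)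
    refine ⟨fun i => d * z i, fun t => ?_⟩
    rw [hf, Finset.mul_sum]
    refine Finset.sum_congr rfl fun i _ => ?_
    rw [Subring.smul_def, smul_eq_mul, mul_assoc d, ← mul_assoc t,
      Subring.mem_center_iff.mp (z i).2 t]
    noncomm_ring
  | zero => exact ⟨0, fun t => by simp⟩
  | add f g _ _ hf hg =>
    obtain ⟨w, hw⟩ := hf
    obtain ⟨w', hw'⟩ := hg
    exact ⟨w + w', fun t => by simp [hw, hw', add_mul, Finset.sum_add_distrib]⟩
  | neg f _ hf =>
    obtain ⟨w, hw⟩ := hf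
    exact ⟨-w, fun t => by simp [hw]⟩

theorem sandwichRing_card_le_of_linearIndependent
    (hb : (k : Set E) ⊆ Submodule.span (Subring.center E) (Set.range b))
    {ι' : Type*} [Fintype ι'] {x : ι' → E}
    (hx : LinearIndependent (Module.End (sandwichRing k) E) x) :
    Fintype.card ι' ≤ Fintype.card ι := by
  classical
  let Ψ : (ι → E) →ₗ[E] (ι' → E) :=
    { toFun := fun w j => ∑ i, w i * x j * b i
      map_add' := fun w w' => by ext j; simp [add_mul, Finset.sum_add_distrib]
      map_smul' := fun e w => by ext j; simp [Finset.mul_sum, mul_assoc] }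
  have hΨ : Function.Surjective Ψ := by
    intro y
    obtain ⟨f, hf⟩ := hx.exists_linearMap_apply_eq y
    obtain ⟨r, hr⟩ := jacobson_density f (Finset.univ.image x)
    obtain ⟨w, hw⟩ := exists_sum_of_mem_sandwichRing hb r.2
    refine ⟨w, funext fun j => ?_⟩
    simp only [Ψ, LinearMap.coe_mk, AddHom.coe_mk, ← hw, ← sandwichRing_smul, ← hf j]
    exact (hr _ (Finset.mem_image_of_mem x (Finset.mem_univ j))).symm
  have := Ψ.finrank_range_le
  rwa [LinearMap.range_eq_top.mpr hΨ, finrank_top, Module.finrank_fintype_fun_eq_card,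
    Module.finrank_fintype_fun_eq_card] at this

theorem finite_center_of_centralizer_subset (k : Subfield E)
    (hk : Set.centralizer (k : Set E) ⊆ k)
    (hfin : ∃ (n : ℕ) (b : Fin n → E),
      (k : Set E) ⊆ Submodule.span (Subring.center E) (Set.range b)) :
    Module.Finite (Subring.center E) E := by
  classical
  obtain ⟨n, b, hkb⟩ := hfin
  have : Module.Finite (Module.End (sandwichRing k) E) E := by
    rw [← Module.rank_lt_aleph0_iff]
    refine (rank_le (n := n) fun s hs => ?_).trans_lt Cardinal.natCast_lt_aleph0
    simpa using sandwichRing_card_le_of_linearIndependent hkb hs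
  obtain ⟨p, u, hu⟩ := Module.Finite.exists_fin (R := Module.End (sandwichRing k) E) (M := E)
  set N := Submodule.span (Subring.center E)
    (Set.range fun q : Fin p × Fin n => u q.1 * b q.2)
  have hN : ∀ j, ∀ c ∈ k, u j * c ∈ N := by
    intro j c hc
    obtain ⟨z, rfl⟩ := (Submodule.mem_span_range_iff_exists_fun _).mp (hkb hc)
    rw [Finset.mul_sum]
    exact N.sum_mem fun i _ => by
      rw [mul_smul_comm]; exact N.smul_mem _ (Submodule.subset_span ⟨(j, i), rfl⟩)
  have hNtop : N = ⊤ := by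
    refine top_unique fun x _ => ?_
    obtain ⟨φ, rfl⟩ := (Submodule.mem_span_range_iff_exists_fun _).mp
      (hu ▸ Submodule.mem_top (x := x))
    exact N.sum_mem fun j _ => by
      rw [Module.End.smul_def, sandwichRing_end_apply]
      exact hN j _ (sandwichRing_end_apply_one_mem hk _)
  exact ⟨hNtop ▸ Submodule.fg_span (Set.finite_range _)⟩

end DivisionRing

namespace Subfield

variable {D : Type*} [DivisionRing D]

def centralizer (s : Set D) : Subfield D :=
  { Subring.centralizer s with inv_mem' := fun _ => Set.inv_mem_centralizer₀ }

theorem centralizer_closure (s : Set D) :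
    Set.centralizer (closure s : Set D) = s.centralizer := by
  refine (Set.centralizer_subset subset_closure).antisymm fun z hz g hg => ?_
  have : closure s ≤ centralizer s.centralizer :=
    closure_le.mpr Set.subset_centralizer_centralizer
  exact (this hg z hz).symm

theorem closure_subset_centralizer_closure {s : Set D} (hs : s ⊆ s.centralizer) :
    (closure s : Set D) ⊆ Set.centralizer (closure s : Set D) := by
  rw [centralizer_closure]
  exact closure_le (t := centralizer s).mpr hs

theorem centralizer_subset_of_maximal {K : Subfield D} (hK : (K : Set D) ⊆ Set.centralizer K)
    (hmax : ∀ K' : Subfield D, (K' : Set D) ⊆ Set.centralizer K' → K ≤ K' → K' = K) :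
    Set.centralizer (K : Set D) ⊆ K := by
  intro c hc
  have hs : insert c (K : Set D) ⊆ Set.centralizer (insert c K) := by
    rintro x (rfl | hx) y (rfl | hy)
    · rfl
    · exact hc y hy
    · exact (hc x hx).symm
    · exact hK hx y hy
  rw [← hmax _ (closure_subset_centralizer_closure hs)
    (subset_closure.trans' (Set.subset_insert _ _))]
  exact subset_closure (Set.mem_insert c _)

theorem le_closure_centralizer_insert_union {K : Subfield D}
    (hK : (K : Set D) ⊆ Set.centralizer K) {S : Set D} (hSK : S ⊆ K) (a : D)
    (hgen : ∀ K' : Subfield D, (Subring.center D : Set D) ⊆ K' → S ⊆ K' → K ≤ K') :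
    K ≤ closure (centralizer (insert a K) ∪ {x ∈ S | a * x ≠ x * a}) := by
  refine hgen _ (fun z hz => subset_closure <| Or.inl (Set.center_subset_centralizer _ hz))
    fun s hs => subset_closure ?_
  by_cases h : a * s = s * a
  · refine Or.inl ?_
    rintro g (rfl | hg)
    exacts [h, (hK hg s (hSK hs)).symm]
  · exact Or.inr ⟨hs, h⟩

theorem exists_fin_span_of_le_closure {K C : Subfield D}
    (hK : (K : Set D) ⊆ Set.centralizer K)
    (halg : ∀ x ∈ K, IsAlgebraic (Subring.center D) x)
    (hC : (Subring.center D : Set D) ⊆ C) (hCK : C ≤ K) {T : Set D} (hT : T.Finite)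
    (hTK : T ⊆ K) (hgen : K ≤ closure (C ∪ T)) :
    ∃ (n : ℕ) (b : Fin n → K),
      (K : Set D) ⊆ Submodule.span C (Set.range fun i => (b i : D)) := by
  let _ : Field K :=
    { K.toDivisionRing with mul_comm := fun x y => Subtype.ext (hK y.2 x x.2) }
  let _ : Algebra (Subring.center D) K :=
    ((algebraMap (Subring.center D) D).codRestrict K fun z => hCK (hC z.2)).toAlgebra
  let ι : K →ₐ[Subring.center D] D := { K.subtype with commutes' := fun _ => rfl }
  let CK : IntermediateField (Subring.center D) K :=
    (C.comap K.subtype).toIntermediateField fun z => hC z.2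
  let TK : Set K := Subtype.val ⁻¹' T
  have : Finite TK := (hT.preimage Subtype.val_injective.injOn).to_subtype
  have hint : ∀ x ∈ TK, IsIntegral CK x := fun x _ =>
    (((isAlgebraic_algHom_iff ι Subtype.val_injective).mp (halg x x.2)).tower_top CK).isIntegral
  have htop : IntermediateField.adjoin CK TK = ⊤ := by
    refine eq_top_iff.mpr fun x _ => ?_
    have hle : closure (C ∪ T) ≤ (IntermediateField.adjoin CK TK).toSubfield.map K.subtype := by
      refine closure_le.mpr ?_
      rintro y (hy | hy)
      · exact ⟨⟨y, hCK hy⟩,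
          (IntermediateField.adjoin CK TK).algebraMap_mem ⟨⟨y, hCK hy⟩, hy⟩, rfl⟩
      · exact ⟨⟨y, hTK hy⟩, IntermediateField.subset_adjoin CK TK hy, rfl⟩
    obtain ⟨y, hy, hyx⟩ := mem_map.mp (hle (hgen x.2))
    exact Subtype.ext hyx ▸ hy
  have : FiniteDimensional CK K := by
    have := IntermediateField.finiteDimensional_adjoin hint
    rw [htop] at this
    exact IntermediateField.topEquiv.toLinearEquiv.finiteDimensional
  obtain ⟨n, b, hb⟩ := Module.Finite.exists_fin (R := CK) (M := K)
  refine ⟨n, b, fun x hx => ?_⟩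
  obtain ⟨c, hc⟩ := (Submodule.mem_span_range_iff_exists_fun CK).mp
    (hb ▸ Submodule.mem_top (x := (⟨x, hx⟩ : K)))
  have hx : x = ∑ i, ((c i : K) : D) * b i := by
    simpa [Algebra.smul_def] using (congrArg Subtype.val hc).symm
  rw [hx]
  exact Submodule.sum_mem _ fun i _ =>
    Submodule.smul_mem _ (⟨_, (c i).2⟩ : C) (Submodule.subset_span ⟨i, rfl⟩)

theorem comap_subset_span_center {E K C : Subfield D} (hKE : K ≤ E) (hCK : C ≤ K)
    (hC : (C : Set D) ⊆ Set.centralizer E) {n : ℕ} (b : Fin n → K)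
    (hb : (K : Set D) ⊆ Submodule.span C (Set.range fun i => (b i : D))) :
    ((K.comap E.subtype : Subfield E) : Set E) ⊆
      Submodule.span (Subring.center E) (Set.range fun i => (⟨b i, hKE (b i).2⟩ : E)) := by
  intro x hx
  obtain ⟨z, hz⟩ := (Submodule.mem_span_range_iff_exists_fun _).mp (hb hx)
  refine (Submodule.mem_span_range_iff_exists_fun _).mpr
    ⟨fun i => ⟨⟨z i, hKE (hCK (z i).2)⟩, Subring.mem_center_iff.mpr fun g =>
      Subtype.ext (hC (z i).2 g g.2)⟩, Subtype.ext ?_⟩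
  simpa [Subring.smul_def, Subfield.smul_def] using hz

end Subfield

theorem stmt_19_general (D : Type*) [DivisionRing D]
    (K : Subring D) (hKdiv : ∀ x ∈ K, x⁻¹ ∈ K)
    (hKcomm : ∀ x ∈ K, ∀ y ∈ K, x * y = y * x)
    (hKmax : ∀ K' : Subring D, (∀ x ∈ K', x⁻¹ ∈ K') →
      (∀ x ∈ K', ∀ y ∈ K', x * y = y * x) → K ≤ K' → K' = K)
    (halg : ∀ x ∈ K, IsAlgebraic (Subring.center D) x)
    (S : Set D) (hSK : S ⊆ K)
    (hgen : ∀ K' : Subring D, (∀ x ∈ K', x⁻¹ ∈ K') →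
      Subring.center D ≤ K' → S ⊆ K' → K ≤ K')
    (a : D) (haK : a ∉ K)
    (hSa : {x ∈ S | a * x ≠ x * a}.Finite) :
    ∃ D₁ : Subring D, (∀ x ∈ D₁, x⁻¹ ∈ D₁) ∧ K ≤ D₁ ∧
      (∃ ha : a ∈ D₁,
        (∀ D' : Subring D, (∀ x ∈ D', x⁻¹ ∈ D') → K ≤ D' → a ∈ D' → D₁ ≤ D') ∧
        Module.Finite (Subring.center D₁) D₁ ∧
        (⟨a, ha⟩ : D₁) ∉ Subring.center D₁) := by
  let KF : Subfield D := { K with inv_mem' := fun {x} => hKdiv x }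
  have hKc : (KF : Set D) ⊆ Set.centralizer KF := fun x hx y hy => hKcomm y hy x hx
  have hcent : Set.centralizer (KF : Set D) ⊆ KF :=
    Subfield.centralizer_subset_of_maximal hKc fun K' hK' hle =>
      SetLike.ext' <| congrArg (fun L : Subring D => (L : Set D)) <|
        hKmax K'.toSubring (fun _ => K'.inv_mem) (fun x hx y hy => hK' hy x hx) hle
  let E := Subfield.closure (insert a (K : Set D))
  let C := Subfield.centralizer (insert a (K : Set D))
  have hCK : C ≤ KF := fun c hc => hcent (Set.centralizer_subset (Set.subset_insert _ _) hc)
  have hgenC := Subfield.le_closure_centralizer_insert_union hKc hSK a fun K' hFK' hSK' =>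
    hgen K'.toSubring (fun _ => K'.inv_mem) hFK' hSK'
  obtain ⟨n, b, hb⟩ := Subfield.exists_fin_span_of_le_closure hKc halg
    (Set.center_subset_centralizer _) hCK hSa (fun x hx => hSK hx.1) hgenC
  have hKE : KF ≤ E := fun x hx => Subfield.subset_closure (Set.mem_insert_of_mem a hx)
  refine ⟨E.toSubring, fun _ => E.inv_mem, hKE, Subfield.subset_closure (Set.mem_insert a _),
    fun D' hD' hKD' haD' =>
      Subfield.closure_le (t := ⟨D', fun {x} => hD' x⟩).mpr (Set.insert_subset haD' hKD'),
    DivisionRing.finite_center_of_centralizer_subset (KF.comap E.subtype) ?_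
      ⟨n, _, Subfield.comap_subset_span_center hKE hCK
        (Subfield.centralizer_closure _).ge b hb⟩,
    fun ha => haK (hcent fun y hy =>
      congrArg Subtype.val (Subring.mem_center_iff.mp ha ⟨y, hKE hy⟩))⟩
  exact fun x hx => hcent fun y hy => congrArg Subtype.val (hx ⟨y, hKE hy⟩ hy)

/-- Let `D` be a division ring with center `F`, `K` a maximal (commutative) subfield of
`D` that is algebraic over `F` and generated over `F` by a subset `S ⊆ K`, and let
`a ∈ D \ K` be such that `S_a = {x ∈ S : a*x ≠ x*a}` is finite. Then the division subring
`K(a)` generated by `K` and `a` is finite-dimensional over its center and `a` is not in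
the center of `K(a)`. -/
theorem stmt_19 (D : Type*) [DivisionRing D]
    (K : Subring D) (hKdiv : ∀ x ∈ K, x⁻¹ ∈ K)
    (hKcomm : ∀ x ∈ K, ∀ y ∈ K, x * y = y * x)
    (hKmax : ∀ K' : Subring D, (∀ x ∈ K', x⁻¹ ∈ K') →
      (∀ x ∈ K', ∀ y ∈ K', x * y = y * x) → K ≤ K' → K' = K)
    (halg : ∀ x ∈ K, IsAlgebraic (Subring.center D) x)
    (S : Set D) (hSK : S ⊆ K) (hFK : Subring.center D ≤ K)
    (hgen : ∀ K' : Subring D, (∀ x ∈ K', x⁻¹ ∈ K') →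
      Subring.center D ≤ K' → S ⊆ K' → K ≤ K')
    (a : D) (haK : a ∉ K)
    (hSa : {x ∈ S | a * x ≠ x * a}.Finite) :
    ∃ D₁ : Subring D, (∀ x ∈ D₁, x⁻¹ ∈ D₁) ∧ K ≤ D₁ ∧
      (∃ ha : a ∈ D₁,
        (∀ D' : Subring D, (∀ x ∈ D', x⁻¹ ∈ D') → K ≤ D' → a ∈ D' → D₁ ≤ D') ∧
        Module.Finite (Subring.center D₁) D₁ ∧
        (⟨a, ha⟩ : D₁) ∉ Subring.center D₁) :=
  stmt_19_general D K hKdiv hKcomm hKmax halg S hSK hgen a haK hSa
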